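/- arXiv:2512.14624 — 2 statements merged into one kernel-verified Lean document; each statement's English description precedes it below -/
import Mathlib

section
/- Under the hypotheses of the preceding statement (g decreasing and (β−1)-Hölder with constant L_* on [a − h_max, b + h_max], ε > 0), the integral ∫_a^b Γ(x) dx is at most 18·V·min{ (Vε)^{1/3}, (L_* ε^β)^{1/(2β+1)} } + (b−a)·ε/h_max³, where Γ(x) := inf_{h ∈ [h_min, h_max]} max_{ω ∈ {−1,1}} [ ω(g(x)−g(x+ωh)) ∨ (ε/h³)^{1/2} ]², V := g(a − h_max) − g(b + h_max), h_min := (ε/L_*²)^{1/(2β+1)} ∧ h_max. -/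
open MeasureTheory Real

/-- `ξ_x(h) := max_{ω ∈ {−1,1}} [ ω(g(x) − g(x+ωh)) ∨ (ε/h³)^{1/2} ]`. -/
noncomputable def xiFn (g : ℝ → ℝ) (ε x h : ℝ) : ℝ :=
  max (max (g x - g (x + h)) (g (x - h) - g x)) (Real.sqrt (ε / h ^ 3))

/-- `Γ(x) := inf_{h ∈ [hmin, hmax]} ξ_x(h)²`. -/
noncomputable def GammaFn (g : ℝ → ℝ) (ε hmin hmax x : ℝ) : ℝ :=
  sInf ((fun h => (xiFn g ε x h) ^ 2) '' Set.Icc hmin hmax)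

/-!
Write `Γ = κ + G` with `κ = ε / hmax³ ≤ Γ`. For a level `t > 0` take the shift
`w = clamp((ε / t)^{1/3}, hmin, hmax)`, so that `ε / w³ ≤ t + κ`. Since
`Γ(x) ≤ max (D_w(x)², ε / w³)` with `D_w(x) = g(x - w) - g(x + w)`, the level set `{G > t}` lies
in `{D_w ≥ √t}`; as `g` is decreasing, `∫_a^b D_w ≤ 2wV`, and Markov's inequality gives
`|{G > t}| ≤ 2wV / √t`. Testing `Γ` at `h = hmax`, and through the Hölder bound at `h = hmin`,
shows `G ≤ T := min (V², 4 L² ρ^{2β-2})` with `ρ = (ε / L²)^{1/(2β+1)}`. Integrating the level-set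
bounds over `(0, T)` (layer cake) gives an explicit bound for `∫ G`, which elementary estimates
compare with both `18 V (Vε)^{1/3}` and `18 V (ε / ρ)^{1/2} = 18 V (L ε^β)^{1/(2β+1)}`.
-/

open Set

lemma sub_shift_mem_Icc {g : ℝ → ℝ} {a b H w x : ℝ} (hg : AntitoneOn g (Icc (a - H) (b + H)))
    (hx : x ∈ Icc a b) (hw : 0 ≤ w) (hwH : w ≤ H) :
    g (x - w) - g (x + w) ∈ Icc 0 (g (a - H) - g (b + H)) := by
  obtain ⟨hxa, hxb⟩ := hx
  have h1 := hg ⟨le_rfl, by linarith⟩ ⟨by linarith, by linarith⟩ (by linarith : a - H ≤ x - w)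
  have h2 := hg ⟨by linarith, by linarith⟩ ⟨by linarith, by linarith⟩ (by linarith : x - w ≤ x + w)
  have h3 := hg ⟨by linarith, by linarith⟩ ⟨by linarith, le_rfl⟩ (by linarith : x + w ≤ b + H)
  exact ⟨by linarith, by linarith⟩

lemma intervalIntegrable_comp_shift_of_antitoneOn {g : ℝ → ℝ} {a b H w : ℝ} (hab : a ≤ b)
    (hw : 0 ≤ w) (hwH : w ≤ H) (hg : AntitoneOn g (Icc (a - H) (b + H))) :
    IntervalIntegrable (fun x => g (x - w)) volume a b ∧
      IntervalIntegrable (fun x => g (x + w)) volume a b := by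
  constructor <;> refine AntitoneOn.intervalIntegrable fun x hx y hy hxy => ?_ <;>
    rw [uIcc_of_le hab] at hx hy <;>
    exact hg ⟨by linarith [hx.1], by linarith [hx.2]⟩ ⟨by linarith [hy.1], by linarith [hy.2]⟩
      (by linarith)

lemma intervalIntegral_sub_shift_le_of_antitoneOn {g : ℝ → ℝ} {a b H w : ℝ} (hab : a ≤ b)
    (hw : 0 ≤ w) (hwH : w ≤ H) (hg : AntitoneOn g (Icc (a - H) (b + H))) :
    ∫ x in a..b, (g (x - w) - g (x + w)) ≤ 2 * w * (g (a - H) - g (b + H)) := by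
  have hint : ∀ u v, a - H ≤ u → u ≤ v → v ≤ b + H → IntervalIntegrable g volume u v :=
    fun u v hu huv hv =>
      (hg.mono (uIcc_subset_Icc ⟨hu, by linarith⟩ ⟨by linarith, hv⟩)).intervalIntegrable
  obtain ⟨hl, hr⟩ := intervalIntegrable_comp_shift_of_antitoneOn hab hw hwH hg
  -- the two shifted integrals share `∫_{a+w}^{b-w} g`, leaving two windows of width `2w`
  have hshift : ∫ x in a..b, (g (x - w) - g (x + w))
      = (∫ x in a - w..a + w, g x) - ∫ x in b - w..b + w, g x := by
    rw [intervalIntegral.integral_sub hl hr, intervalIntegral.integral_comp_sub_right,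
      intervalIntegral.integral_comp_add_right]
    exact intervalIntegral.integral_interval_sub_interval_comm
      (hint _ _ (by linarith) (by linarith) (by linarith))
      (hint _ _ (by linarith) (by linarith) (by linarith))
      (hint _ _ (by linarith) (by linarith) (by linarith))
  have hleft : ∫ x in a - w..a + w, g x ≤ ∫ _ in a - w..a + w, g (a - H) :=
    intervalIntegral.integral_mono_on (by linarith)
      (hint _ _ (by linarith) (by linarith) (by linarith)) intervalIntegrable_const
      fun x hx => hg ⟨le_rfl, by linarith⟩ ⟨by linarith [hx.1], by linarith [hx.2]⟩
        (by linarith [hx.1])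
  have hright : ∫ _ in b - w..b + w, g (b + H) ≤ ∫ x in b - w..b + w, g x :=
    intervalIntegral.integral_mono_on (by linarith) intervalIntegrable_const
      (hint _ _ (by linarith) (by linarith) (by linarith))
      fun x hx => hg ⟨by linarith [hx.1], by linarith [hx.2]⟩ ⟨by linarith, le_rfl⟩
        (by linarith [hx.2])
  rw [intervalIntegral.integral_const, smul_eq_mul] at hleft hright
  linarith

lemma GammaFn_le_max_sq {g : ℝ → ℝ} {ε hmin hmax x h : ℝ} (hh : h ∈ Icc hmin hmax) (h0 : 0 ≤ h)
    (hg : AntitoneOn g (Icc (x - h) (x + h))) :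
    GammaFn g ε hmin hmax x ≤ max ((g (x - h) - g (x + h)) ^ 2) (ε / h ^ 3) := by
  set M := max ((g (x - h) - g (x + h)) ^ 2) (ε / h ^ 3)
  have hbdd : BddBelow ((fun h => xiFn g ε x h ^ 2) '' Icc hmin hmax) :=
    ⟨0, by rintro _ ⟨_, -, rfl⟩; positivity⟩
  refine (csInf_le hbdd ⟨h, hh, rfl⟩).trans ?_
  have hleft : g x ≤ g (x - h) :=
    hg ⟨by linarith, by linarith⟩ ⟨by linarith, by linarith⟩ (by linarith)
  have hright : g (x + h) ≤ g x :=
    hg ⟨by linarith, by linarith⟩ ⟨by linarith, by linarith⟩ (by linarith)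
  have hdiff : g (x - h) - g (x + h) ≤ √M :=
    (le_abs_self _).trans (Real.abs_le_sqrt (le_max_left _ _))
  have hxi : xiFn g ε x h ≤ √M :=
    max_le (max_le (by linarith) (by linarith)) (Real.sqrt_le_sqrt (le_max_right _ _))
  have hxi0 : 0 ≤ xiFn g ε x h := (Real.sqrt_nonneg _).trans (le_max_right _ _)
  exact (Real.le_sqrt hxi0 (le_max_of_le_left (sq_nonneg _))).mp hxi

lemma div_pow_three_le_GammaFn {g : ℝ → ℝ} {ε hmin hmax : ℝ} (hε : 0 ≤ ε) (hmin0 : 0 < hmin)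
    (hminmax : hmin ≤ hmax) (x : ℝ) : ε / hmax ^ 3 ≤ GammaFn g ε hmin hmax x := by
  refine le_csInf ⟨_, hmin, ⟨le_rfl, hminmax⟩, rfl⟩ ?_
  rintro _ ⟨h, hh, rfl⟩
  have hh0 : 0 < h := hmin0.trans_le hh.1
  calc ε / hmax ^ 3 ≤ ε / h ^ 3 := by gcongr; exact hh.2
    _ = √(ε / h ^ 3) ^ 2 := (Real.sq_sqrt (by positivity)).symm
    _ ≤ xiFn g ε x h ^ 2 := by gcongr; exact le_max_right _ _

lemma GammaFn_sub_le_sq {g : ℝ → ℝ} {a b hmin hmax ε x : ℝ}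
    (hmono : AntitoneOn g (Icc (a - hmax) (b + hmax))) (hε : 0 ≤ ε) (hmax0 : 0 ≤ hmax)
    (hminmax : hmin ≤ hmax) (hx : x ∈ Icc a b) :
    GammaFn g ε hmin hmax x - ε / hmax ^ 3 ≤ (g (a - hmax) - g (b + hmax)) ^ 2 := by
  have hΓ := GammaFn_le_max_sq (ε := ε) (x := x) ⟨hminmax, le_rfl⟩ hmax0
    (hmono.mono (Icc_subset_Icc (by linarith [hx.1]) (by linarith [hx.2])))
  obtain ⟨hD0, hDV⟩ := sub_shift_mem_Icc hmono hx hmax0 le_rfl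
  have hD2 := pow_le_pow_left₀ hD0 hDV 2
  have hκ : 0 ≤ ε / hmax ^ 3 := by positivity
  linarith [max_le (show (g (x - hmax) - g (x + hmax)) ^ 2 ≤ _ + ε / hmax ^ 3 by linarith)
    (show ε / hmax ^ 3 ≤ (g (a - hmax) - g (b + hmax)) ^ 2 + ε / hmax ^ 3 by nlinarith)]

lemma two_mul_rpow_sub_one_le {h ρ β : ℝ} (h0 : 0 ≤ h) (hρ : h ≤ ρ) (hβ : β ∈ Icc (1 : ℝ) 2) :
    (2 * h) ^ (β - 1) ≤ 2 * ρ ^ (β - 1) := by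
  rw [Real.mul_rpow zero_le_two h0]
  gcongr
  · simpa using Real.rpow_le_rpow_of_exponent_le one_le_two (by linarith [hβ.2] : β - 1 ≤ 1)
  · linarith [hβ.1]

lemma GammaFn_sub_le_of_holder {g : ℝ → ℝ} {a b hmax L β ε ρ x : ℝ}
    (hmono : AntitoneOn g (Icc (a - hmax) (b + hmax)))
    (hholder : ∀ x ∈ Icc (a - hmax) (b + hmax), ∀ y ∈ Icc (a - hmax) (b + hmax),
      |g x - g y| ≤ L * |x - y| ^ (β - 1))
    (hL : 0 ≤ L) (hβ : β ∈ Icc (1 : ℝ) 2) (hε : 0 ≤ ε) (hρ : 0 < ρ) (hmax0 : 0 < hmax)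
    (hρε : ε ≤ (L * ρ ^ (β - 1)) ^ 2 * ρ ^ 3) (hx : x ∈ Icc a b) :
    GammaFn g ε (min ρ hmax) hmax x - ε / hmax ^ 3 ≤ 4 * (L * ρ ^ (β - 1)) ^ 2 := by
  set s := min ρ hmax
  have hs : 0 ≤ s := le_min hρ.le hmax0.le
  have hsmax : s ≤ hmax := min_le_right _ _
  have hΓ := GammaFn_le_max_sq (ε := ε) (x := x) ⟨le_rfl, hsmax⟩ hs
    (hmono.mono (Icc_subset_Icc (by linarith [hx.1]) (by linarith [hx.2])))
  obtain ⟨hD0, -⟩ := sub_shift_mem_Icc hmono hx hs hsmax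
  have hD : g (x - s) - g (x + s) ≤ 2 * (L * ρ ^ (β - 1)) := by
    have hxs := hholder (x - s) ⟨by linarith [hx.1], by linarith [hx.2]⟩
      (x + s) ⟨by linarith [hx.1], by linarith [hx.2]⟩
    rw [show x - s - (x + s) = -(2 * s) by ring, abs_neg,
      abs_of_nonneg (by positivity : (0 : ℝ) ≤ 2 * s)] at hxs
    calc _ ≤ L * (2 * s) ^ (β - 1) := (le_abs_self _).trans hxs
      _ ≤ L * (2 * ρ ^ (β - 1)) := by
        gcongr; exact two_mul_rpow_sub_one_le hs (min_le_left _ _) hβ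
      _ = _ := by ring
  have hD2 := pow_le_pow_left₀ hD0 hD 2
  have hs3 : ε / s ^ 3 ≤ max (ε / ρ ^ 3) (ε / hmax ^ 3) := by
    rcases min_choice ρ hmax with h | h <;> rw [show s = _ from h] <;> simp
  have hρ3 : ε / ρ ^ 3 ≤ (L * ρ ^ (β - 1)) ^ 2 := by rwa [div_le_iff₀ (by positivity)]
  have hκ : 0 ≤ ε / hmax ^ 3 := by positivity
  rw [sub_le_iff_le_add]
  refine hΓ.trans (max_le (by linarith) (hs3.trans (max_le ?_ ?_)))
  · nlinarith [sq_nonneg (L * ρ ^ (β - 1))]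
  · nlinarith [sq_nonneg (L * ρ ^ (β - 1))]

lemma integral_eq_intervalIntegral_measureReal_lt {α : Type*} [MeasurableSpace α]
    {μ : Measure α} {f : α → ℝ} {T : ℝ} (hfi : Integrable f μ) (hf0 : 0 ≤ᵐ[μ] f)
    (hfT : ∀ᵐ x ∂μ, f x ≤ T) (hT : 0 ≤ T) :
    ∫ x, f x ∂μ = ∫ t in 0..T, μ.real {x | t < f x} := by
  rw [hfi.integral_eq_integral_meas_lt hf0, intervalIntegral.integral_of_le hT]
  refine setIntegral_eq_of_subset_of_forall_sdiff_eq_zero measurableSet_Ioi Ioc_subset_Ioi_self ?_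
  rintro t ⟨ht, htT⟩
  have hTt : T < t := not_le.mp fun h => htT ⟨ht, h⟩
  have hnull : μ {x | t < f x} = 0 :=
    measure_eq_zero_iff_ae_notMem.2 (hfT.mono fun x hx => not_lt.2 (hx.trans hTt.le))
  simp [measureReal_def, hnull]

lemma antitone_measureReal_lt {α : Type*} [MeasurableSpace α] {μ : Measure α}
    [IsFiniteMeasure μ] (f : α → ℝ) : Antitone fun t => μ.real {x | t < f x} :=
  fun _ _ hst => measureReal_mono fun _ hx => lt_of_le_of_lt hst hx

lemma measureReal_lt_GammaFn_sub_le {g : ℝ → ℝ} {a b hmin hmax ε t w : ℝ} (hab : a ≤ b)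
    (hmono : AntitoneOn g (Icc (a - hmax) (b + hmax))) (ht : 0 < t) (hw : w ∈ Icc hmin hmax)
    (hw0 : 0 ≤ w) (hε : 0 ≤ ε) (hwt : ε / w ^ 3 ≤ t + ε / hmax ^ 3) :
    (volume.restrict (Ioc a b)).real {x | t < GammaFn g ε hmin hmax x - ε / hmax ^ 3}
      ≤ 2 * w * (g (a - hmax) - g (b + hmax)) / √t := by
  set μ := volume.restrict (Ioc a b)
  set D := fun x => g (x - w) - g (x + w)
  have hanti : ∀ x ∈ Icc a b, AntitoneOn g (Icc (x - w) (x + w)) := fun x hx =>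
    hmono.mono (Icc_subset_Icc (by linarith [hx.1, hw.2]) (by linarith [hx.2, hw.2]))
  have hD0 : ∀ x ∈ Icc a b, 0 ≤ D x := fun x hx => (sub_shift_mem_Icc hmono hx hw0 hw.2).1
  -- `Γ ≤ max (D², ε / w³)` and `ε / w³ ≤ t + κ < Γ` force `D² > t + κ`
  have hlevel : ∀ x ∈ Icc a b, t < GammaFn g ε hmin hmax x - ε / hmax ^ 3 → √t ≤ D x := by
    intro x hx hxt
    have hΓ := GammaFn_le_max_sq hw hw0 (hanti x hx) (ε := ε)
    have htD : t + ε / hmax ^ 3 < D x ^ 2 := by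
      by_contra! h
      linarith [hΓ.trans (max_le h hwt)]
    replace htD : t ≤ D x ^ 2 := by linarith [div_nonneg hε (pow_nonneg (hw0.trans hw.2) 3)]
    simpa [Real.sqrt_sq (hD0 x hx)] using Real.sqrt_le_sqrt htD
  have hDint : IntervalIntegrable D volume a b :=
    (intervalIntegrable_comp_shift_of_antitoneOn hab hw0 hw.2 hmono).elim .sub
  have hmarkov := mul_meas_ge_le_integral_of_nonneg
    ((ae_restrict_mem measurableSet_Ioc).mono fun x hx => hD0 x (Ioc_subset_Icc_self hx))
    hDint.1 √t
  have hsub : {x | t < GammaFn g ε hmin hmax x - ε / hmax ^ 3} ≤ᵐ[μ] {x | √t ≤ D x} :=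
    (ae_restrict_mem measurableSet_Ioc).mono fun x hx hxt => hlevel x (Ioc_subset_Icc_self hx) hxt
  rw [le_div_iff₀ (Real.sqrt_pos.2 ht), mul_comm]
  calc √t * μ.real {x | t < GammaFn g ε hmin hmax x - ε / hmax ^ 3}
      ≤ √t * μ.real {x | √t ≤ D x} :=
        mul_le_mul_of_nonneg_left
          (ENNReal.toReal_mono (measure_ne_top _ _) (measure_mono_ae hsub)) (Real.sqrt_nonneg _)
    _ ≤ ∫ x in a..b, D x := by rwa [intervalIntegral.integral_of_le hab]
    _ ≤ 2 * w * (g (a - hmax) - g (b + hmax)) :=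
        intervalIntegral_sub_shift_le_of_antitoneOn hab hw0 hw.2 hmono

lemma measureReal_lt_GammaFn_sub_le_of_ge {g : ℝ → ℝ} {a b hmin hmax ε t : ℝ} (hab : a ≤ b)
    (hmono : AntitoneOn g (Icc (a - hmax) (b + hmax))) (hε : 0 ≤ ε) (hmin0 : 0 < hmin)
    (hminmax : hmin ≤ hmax) (ht : ε / hmin ^ 3 ≤ t) (ht0 : 0 < t) :
    (volume.restrict (Ioc a b)).real {x | t < GammaFn g ε hmin hmax x - ε / hmax ^ 3}
      ≤ 2 * (g (a - hmax) - g (b + hmax)) * hmin * t ^ (-(1 / 2) : ℝ) := by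
  have hκ : 0 ≤ ε / hmax ^ 3 := div_nonneg hε (pow_nonneg (hmin0.le.trans hminmax) 3)
  calc _ ≤ 2 * hmin * (g (a - hmax) - g (b + hmax)) / √t :=
        measureReal_lt_GammaFn_sub_le hab hmono ht0 ⟨le_rfl, hminmax⟩ hmin0.le hε (by linarith)
    _ = _ := by rw [Real.sqrt_eq_rpow, Real.rpow_neg ht0.le]; ring

lemma measureReal_lt_GammaFn_sub_le_of_le {g : ℝ → ℝ} {a b hmin hmax ε t : ℝ} (hab : a ≤ b)
    (hmono : AntitoneOn g (Icc (a - hmax) (b + hmax))) (hmin0 : 0 < hmin)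
    (hminmax : hmin ≤ hmax) (ht : t ≤ ε / hmin ^ 3) (ht0 : 0 < t) :
    (volume.restrict (Ioc a b)).real {x | t < GammaFn g ε hmin hmax x - ε / hmax ^ 3}
      ≤ 2 * (g (a - hmax) - g (b + hmax)) * ε ^ (1 / 3 : ℝ) * t ^ (-(5 / 6) : ℝ) := by
  -- the optimal shift `w = (ε / t)^(1/3)` balances `ε / w³` against `t`, clipped at `hmax`
  have hε : 0 < ε := by
    have := ht0.trans_le ht
    rwa [div_pos_iff_of_pos_right (by positivity)] at this
  set y := (ε / t) ^ (1 / 3 : ℝ)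
  have hy3 : y ^ 3 = ε / t := by
    rw [← Real.rpow_natCast, ← Real.rpow_mul (by positivity)]; norm_num
  have hminy : hmin ≤ y := by
    refine le_of_pow_le_pow_left₀ three_ne_zero (by positivity) ?_
    rw [hy3, le_div_iff₀ ht0]
    rwa [le_div_iff₀ (by positivity), mul_comm] at ht
  have hV : 0 ≤ g (a - hmax) - g (b + hmax) :=
    sub_nonneg.2 (hmono ⟨le_rfl, by linarith⟩ ⟨by linarith, le_rfl⟩ (by linarith))
  have hw : min hmax y ∈ Icc hmin hmax := ⟨le_min hminmax hminy, min_le_left _ _⟩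
  have hwt : ε / min hmax y ^ 3 ≤ t + ε / hmax ^ 3 := by
    rcases min_choice hmax y with h | h <;> rw [h]
    · linarith
    · rw [hy3, div_div_cancel₀ hε.ne']
      linarith [div_nonneg hε.le (pow_nonneg (hmin0.le.trans hminmax) 3)]
  calc _ ≤ 2 * min hmax y * (g (a - hmax) - g (b + hmax)) / √t :=
        measureReal_lt_GammaFn_sub_le hab hmono ht0 hw (by linarith [hw.1]) hε.le hwt
    _ ≤ 2 * y * (g (a - hmax) - g (b + hmax)) / √t := by gcongr; exact min_le_right _ _
    _ = _ := by
      simp only [y]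
      rw [Real.div_rpow hε.le ht0.le, Real.sqrt_eq_rpow, div_eq_mul_inv, div_eq_mul_inv,
        ← Real.rpow_neg ht0.le, ← Real.rpow_neg ht0.le]
      rw [show -(5 / 6 : ℝ) = -(1 / 3) + -(1 / 2) by norm_num, Real.rpow_add ht0]
      ring

lemma intervalIntegral_le_mul_rpow {F : ℝ → ℝ} {A r u v : ℝ} (hF : IntervalIntegrable F volume u v)
    (huv : u ≤ v) (hr : -1 < r) (h : ∀ t ∈ Ioo u v, F t ≤ A * t ^ r) :
    ∫ t in u..v, F t ≤ A * ((v ^ (r + 1) - u ^ (r + 1)) / (r + 1)) := by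
  calc ∫ t in u..v, F t ≤ ∫ t in u..v, A * t ^ r :=
        intervalIntegral.integral_mono_on_of_le_Ioo huv hF
          ((intervalIntegral.intervalIntegrable_rpow' hr).const_mul A) h
    _ = _ := by rw [intervalIntegral.integral_const_mul, integral_rpow (Or.inl hr)]

lemma intervalIntegral_le_of_le_rpow_of_le_rpow {F : ℝ → ℝ} (hF : Antitone F) {A B c T : ℝ}
    (hc : 0 ≤ c) (hT : 0 ≤ T) (hsmall : ∀ t, 0 < t → t ≤ c → F t ≤ A * t ^ (-(5 / 6) : ℝ))
    (hlarge : ∀ t, c ≤ t → F t ≤ B * t ^ (-(1 / 2) : ℝ)) :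
    ∫ t in 0..T, F t ≤ 6 * A * min T c ^ (1 / 6 : ℝ) + 2 * B * (√T - √(min T c)) := by
  set m := min T c
  have hm : 0 ≤ m := le_min hT hc
  have hmT : m ≤ T := min_le_left _ _
  have hlow := intervalIntegral_le_mul_rpow hF.intervalIntegrable hm (by norm_num)
    fun t ht => hsmall t ht.1 (ht.2.le.trans (min_le_right _ _))
  have hhigh := intervalIntegral_le_mul_rpow hF.intervalIntegrable hmT (by norm_num)
    fun t ht => hlarge t (by
      rcases min_lt_iff.mp ht.1 with h | h
      · exact absurd ht.2 (not_lt.2 h.le)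
      · exact h.le)
  rw [← intervalIntegral.integral_add_adjacent_intervals (b := m) hF.intervalIntegrable
    hF.intervalIntegrable, Real.sqrt_eq_rpow, Real.sqrt_eq_rpow]
  norm_num at hlow hhigh
  linarith [show A * (m ^ (1 / 6 : ℝ) / (1 / 6)) = 6 * A * m ^ (1 / 6 : ℝ) by ring,
    show B * ((T ^ (1 / 2 : ℝ) - m ^ (1 / 2 : ℝ)) / (1 / 2))
      = 2 * B * (T ^ (1 / 2 : ℝ) - m ^ (1 / 2 : ℝ)) by ring]

/-- `∫_0^T` of the level-set bound `2 ε^{1/3} t^{-5/6}` (for `t ≤ ε / s³`), `2 s t^{-1/2}` (beyond),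
divided by `V`. -/
noncomputable def tailBound (ε s T : ℝ) : ℝ :=
  12 * ε ^ (1 / 3 : ℝ) * min T (ε / s ^ 3) ^ (1 / 6 : ℝ) + 4 * s * (√T - √(min T (ε / s ^ 3)))

lemma rpow_third_mul_rpow_sixth_pow_six {x y : ℝ} (hx : 0 ≤ x) (hy : 0 ≤ y) :
    (x ^ (1 / 3 : ℝ) * y ^ (1 / 6 : ℝ)) ^ 6 = x ^ 2 * y := by
  rw [mul_pow, ← Real.rpow_natCast, ← Real.rpow_natCast, ← Real.rpow_mul hx,
    ← Real.rpow_mul hy]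
  norm_num

lemma tailBound_of_le {ε s T : ℝ} (hT : T ≤ ε / s ^ 3) :
    tailBound ε s T = 12 * (ε ^ (1 / 3 : ℝ) * T ^ (1 / 6 : ℝ)) := by
  rw [tailBound, min_eq_left hT]; ring

lemma tailBound_of_ge {ε s T : ℝ} (hε : 0 ≤ ε) (hs : 0 < s) (hT : ε / s ^ 3 ≤ T) :
    tailBound ε s T = 8 * √(ε / s) + 4 * (s * √T) := by
  have hcube : ε ^ (1 / 3 : ℝ) * (ε / s ^ 3) ^ (1 / 6 : ℝ) = √(ε / s) := by
    refine (pow_left_inj₀ (by positivity) (Real.sqrt_nonneg _) (by norm_num : 6 ≠ 0)).mp ?_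
    rw [rpow_third_mul_rpow_sixth_pow_six hε (by positivity),
      show √(ε / s) ^ 6 = (√(ε / s) ^ 2) ^ 3 by ring, Real.sq_sqrt (by positivity)]
    field_simp
  have hsq : s * √(ε / s ^ 3) = √(ε / s) := by
    rw [show ε / s = s ^ 2 * (ε / s ^ 3) by field_simp, Real.sqrt_mul (sq_nonneg s),
      Real.sqrt_sq hs.le]
  rw [tailBound, min_eq_right hT]
  linear_combination 12 * hcube - 4 * hsq

lemma tailBound_le_of_le_div_pow_three {ε s T E : ℝ} (hε : 0 < ε) (hT : 0 ≤ T) (hE : 0 ≤ E)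
    (hTE : ε ^ 2 * T ≤ 4 * E ^ 6) (hTs : T ≤ ε / s ^ 3) : tailBound ε s T ≤ 18 * E := by
  rw [tailBound_of_le hTs]
  have : ε ^ (1 / 3 : ℝ) * T ^ (1 / 6 : ℝ) ≤ 3 / 2 * E := by
    refine le_of_pow_le_pow_left₀ (by norm_num : 6 ≠ 0) (by positivity) ?_
    rw [rpow_third_mul_rpow_sixth_pow_six hε.le hT]
    nlinarith [pow_nonneg hE 6]
  linarith

lemma tailBound_le_rpow_one_third {ε s ρ T V : ℝ} (hε : 0 < ε) (hs : 0 < s) (hsρ : s ≤ ρ)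
    (hT : 0 ≤ T) (hTρ : T * ρ ^ 3 ≤ 4 * ε) (hV : 0 ≤ V) (hTV : T ≤ V ^ 2) :
    tailBound ε s T ≤ 18 * (V * ε) ^ (1 / 3 : ℝ) := by
  set E := (V * ε) ^ (1 / 3 : ℝ)
  have hE : 0 ≤ E := by positivity
  have hTE : ε ^ 2 * T ≤ E ^ 6 := by
    rw [← Real.rpow_natCast _ 6, ← Real.rpow_mul (by positivity)]
    norm_num
    nlinarith [sq_nonneg ε]
  rcases le_total T (ε / s ^ 3) with hTs | hTs
  · exact tailBound_le_of_le_div_pow_three hε hT hE (by linarith [pow_nonneg hE 6]) hTs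
  rw [tailBound_of_ge hε.le hs hTs]
  set p := √(ε / s)
  have hp : p ^ 2 * s = ε := by rw [Real.sq_sqrt (by positivity)]; field_simp
  have hpE : p ≤ E := by
    refine le_of_pow_le_pow_left₀ (by norm_num : 6 ≠ 0) hE (le_trans ?_ hTE)
    have hsT : ε ≤ T * s ^ 3 := by rwa [div_le_iff₀ (by positivity)] at hTs
    have : p ^ 6 * s ^ 3 = ε ^ 3 := by rw [← hp]; ring
    nlinarith [pow_pos hs 3, sq_nonneg ε]
  have hq : s * √T ≤ 2 * p := by
    refine le_of_pow_le_pow_left₀ two_ne_zero (by positivity) ?_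
    have hTs3 : T * s ^ 3 ≤ 4 * ε :=
      (mul_le_mul_of_nonneg_left (pow_le_pow_left₀ hs.le hsρ 3) hT).trans hTρ
    rw [mul_pow, mul_pow, Real.sq_sqrt hT]
    nlinarith
  linarith

lemma tailBound_le_of_sq_mul_eq {ε s ρ T E : ℝ} (hε : 0 < ε) (hs : 0 < s) (hsρ : s ≤ ρ)
    (hT : 0 ≤ T) (hTρ : T * ρ ^ 3 ≤ 4 * ε) (hE : 0 ≤ E) (hEρ : E ^ 2 * ρ = ε) :
    tailBound ε s T ≤ 18 * E := by
  have hρ : 0 < ρ := hs.trans_le hsρ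
  rcases le_total T (ε / s ^ 3) with hTs | hTs
  · refine tailBound_le_of_le_div_pow_three hε hT hE (le_of_mul_le_mul_right ?_ (pow_pos hρ 3)) hTs
    calc ε ^ 2 * T * ρ ^ 3 = ε ^ 2 * (T * ρ ^ 3) := by ring
      _ ≤ ε ^ 2 * (4 * ε) := by gcongr
      _ = 4 * E ^ 6 * ρ ^ 3 := by rw [← hEρ]; ring
  rw [tailBound_of_ge hε.le hs hTs]
  set p := √(ε / s)
  have hp : p ^ 2 * s = ε := by rw [Real.sq_sqrt (by positivity)]; field_simp
  have hp0 : 0 < p := Real.sqrt_pos.2 (by positivity)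
  have hEp : E ≤ p := by
    refine le_of_pow_le_pow_left₀ two_ne_zero hp0.le ?_
    nlinarith [mul_le_mul_of_nonneg_left hsρ (sq_nonneg p)]
  have hρs : ρ ^ 3 ≤ 4 * s ^ 3 := by
    have hsT : ε ≤ T * s ^ 3 := by rwa [div_le_iff₀ (by positivity)] at hTs
    nlinarith [pow_pos hρ 3, pow_pos hs 3]
  have hp3 : p ^ 3 ≤ 2 * E ^ 3 := by
    refine le_of_pow_le_pow_left₀ two_ne_zero (by positivity) ?_
    have : p ^ 6 * s ^ 3 = E ^ 6 * ρ ^ 3 := by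
      rw [show p ^ 6 * s ^ 3 = (p ^ 2 * s) ^ 3 by ring, hp, ← hEρ]; ring
    nlinarith [pow_pos hs 3, pow_nonneg hE 6]
  have hq : s * √T * p ^ 2 ≤ 2 * E ^ 3 := by
    refine le_of_pow_le_pow_left₀ two_ne_zero (by positivity) ?_
    have : (s * √T * p ^ 2) ^ 2 * ρ ^ 3 = T * ρ ^ 3 * ε ^ 2 := by
      rw [mul_pow, mul_pow, Real.sq_sqrt hT, ← hp]; ring
    have : ε ^ 3 = E ^ 6 * ρ ^ 3 := by rw [← hEρ]; ring
    nlinarith [pow_pos hρ 3, sq_nonneg ε]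
  -- `x = p / E ∈ [1, 2^(1/3)]` satisfies `x³ + 1 ≤ 2x²`, i.e. `(x - 1)(x² - x - 1) ≤ 0`
  have hcubic : p ^ 3 + E ^ 3 ≤ 2 * E * p ^ 2 := by
    have hp32 : p ≤ 3 / 2 * E := by
      by_contra! h
      nlinarith [pow_lt_pow_left₀ h (by positivity) (three_ne_zero), pow_nonneg hE 3]
    nlinarith [mul_nonneg (sub_nonneg.2 hEp) (sub_nonneg.2 hp32)]
  refine le_of_mul_le_mul_right ?_ (pow_pos hp0 2)
  nlinarith

lemma intervalIntegral_GammaFn_le {g : ℝ → ℝ} {a b hmin hmax ε T : ℝ} (hab : a ≤ b)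
    (hmono : AntitoneOn g (Icc (a - hmax) (b + hmax))) (hε : 0 < ε) (hmin0 : 0 < hmin)
    (hminmax : hmin ≤ hmax) (hΓ : IntervalIntegrable (GammaFn g ε hmin hmax) volume a b)
    (hT : 0 ≤ T) (hΓT : ∀ x ∈ Icc a b, GammaFn g ε hmin hmax x - ε / hmax ^ 3 ≤ T) :
    ∫ x in a..b, GammaFn g ε hmin hmax x
      ≤ (g (a - hmax) - g (b + hmax)) * tailBound ε hmin T + (b - a) * (ε / hmax ^ 3) := by
  set κ := ε / hmax ^ 3
  have hlayer : ∫ x in a..b, (GammaFn g ε hmin hmax x - κ)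
      = ∫ t in 0..T, (volume.restrict (Ioc a b)).real {x | t < GammaFn g ε hmin hmax x - κ} := by
    rw [intervalIntegral.integral_of_le hab]
    refine integral_eq_intervalIntegral_measureReal_lt (hΓ.1.sub (integrable_const κ)) ?_ ?_ hT
    all_goals filter_upwards [ae_restrict_mem measurableSet_Ioc] with x hx
    · exact sub_nonneg.2 (div_pow_three_le_GammaFn hε.le hmin0 hminmax x)
    · exact hΓT x (Ioc_subset_Icc_self hx)
  have hc : 0 < ε / hmin ^ 3 := by positivity
  have htail := intervalIntegral_le_of_le_rpow_of_le_rpow (antitone_measureReal_lt _) hc.le hT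
    (fun t ht htc => measureReal_lt_GammaFn_sub_le_of_le hab hmono hmin0 hminmax htc ht)
    (fun t htc => measureReal_lt_GammaFn_sub_le_of_ge hab hmono hε.le hmin0 hminmax htc
      (hc.trans_le htc))
  rw [intervalIntegral.integral_sub hΓ intervalIntegrable_const, intervalIntegral.integral_const,
    smul_eq_mul] at hlayer
  rw [tailBound]
  linarith

lemma sq_mul_rpow_sub_one_mul_pow_three {L β ρ ε : ℝ} (hL : L ≠ 0) (hρ : 0 < ρ)
    (hρε : ρ ^ (2 * β + 1) = ε / L ^ 2) : (L * ρ ^ (β - 1)) ^ 2 * ρ ^ 3 = ε := by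
  rw [mul_pow, ← Real.rpow_natCast (ρ ^ (β - 1)), ← Real.rpow_mul hρ.le,
    ← Real.rpow_natCast ρ 3, mul_assoc, ← Real.rpow_add hρ]
  push_cast
  rw [show (β - 1) * 2 + 3 = 2 * β + 1 by ring, hρε]
  field_simp

lemma sq_rpow_mul_rpow_eq {L ε β : ℝ} (hL : 0 < L) (hε : 0 < ε) (hβ : 0 < 2 * β + 1) :
    ((L * ε ^ β) ^ (1 / (2 * β + 1))) ^ 2 * (ε / L ^ 2) ^ (1 / (2 * β + 1)) = ε := by
  rw [← Real.rpow_natCast, ← Real.rpow_mul (by positivity), mul_comm _ ((2 : ℕ) : ℝ),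
    Real.rpow_mul (by positivity), Real.rpow_natCast, ← Real.mul_rpow (by positivity)
    (by positivity)]
  rw [show (L * ε ^ β) ^ 2 * (ε / L ^ 2) = ε ^ (2 * β + 1) by
    rw [Real.rpow_add hε, Real.rpow_one, mul_comm 2 β, Real.rpow_mul hε.le]
    field_simp
    rw [← Real.rpow_natCast]; push_cast; ring]
  rw [one_div, Real.rpow_rpow_inv hε.le hβ.ne']

/-- Integrated error bound for the pointwise-optimal error of a decreasing Hölder function:
`∫_a^b Γ ≤ 18 V min{(Vε)^{1/3}, (L ε^β)^{1/(2β+1)}} + (b−a) ε / h_max³`. -/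
theorem gamma_integral_bound
    (a b hmax L β ε : ℝ) (hab : a < b) (hhmax : 0 < hmax) (hL : 0 < L)
    (hβ : β ∈ Set.Icc (1:ℝ) 2) (hε : 0 < ε)
    (g : ℝ → ℝ)
    (hmono : AntitoneOn g (Set.Icc (a - hmax) (b + hmax)))
    (hholder : ∀ x ∈ Set.Icc (a - hmax) (b + hmax), ∀ y ∈ Set.Icc (a - hmax) (b + hmax),
      |g x - g y| ≤ L * |x - y| ^ (β - 1))
    (hmin V : ℝ)
    (hhmin : hmin = min ((ε / L ^ 2) ^ (1 / (2 * β + 1))) hmax)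
    (hV : V = g (a - hmax) - g (b + hmax)) :
    ∫ x in a..b, GammaFn g ε hmin hmax x ≤
      18 * V * min ((V * ε) ^ ((1:ℝ)/3)) ((L * ε ^ β) ^ (1 / (2 * β + 1))) +
        (b - a) * ε / hmax ^ 3 := by
  have hβ0 : 0 < 2 * β + 1 := by linarith [hβ.1]
  set ρ := (ε / L ^ 2) ^ (1 / (2 * β + 1))
  have hρ0 : 0 < ρ := by positivity
  have hmin0 : 0 < min ρ hmax := lt_min hρ0 hhmax
  have hK : (L * ρ ^ (β - 1)) ^ 2 * ρ ^ 3 = ε := sq_mul_rpow_sub_one_mul_pow_three hL.ne' hρ0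
    (by rw [← Real.rpow_mul (by positivity), one_div_mul_cancel hβ0.ne', Real.rpow_one])
  subst hhmin hV
  set V := g (a - hmax) - g (b + hmax)
  have hV0 : 0 ≤ V := by
    obtain ⟨hD0, hDV⟩ := sub_shift_mem_Icc hmono ⟨le_rfl, hab.le⟩ hhmax.le le_rfl
    exact hD0.trans hDV
  by_cases hΓ : IntervalIntegrable (GammaFn g ε (min ρ hmax) hmax) volume a b
  swap
  · rw [intervalIntegral.integral_undef hΓ]
    have := sub_pos.2 hab
    positivity
  set T := min (V ^ 2) (4 * (L * ρ ^ (β - 1)) ^ 2)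
  have hT : 0 ≤ T := by positivity
  have hTρ : T * ρ ^ 3 ≤ 4 * ε := by
    nlinarith [min_le_right (V ^ 2) (4 * (L * ρ ^ (β - 1)) ^ 2), pow_pos hρ0 3]
  have hΓT : ∀ x ∈ Icc a b, GammaFn g ε (min ρ hmax) hmax x - ε / hmax ^ 3 ≤ T := fun x hx =>
    le_min (GammaFn_sub_le_sq hmono hε.le hhmax.le (min_le_right _ _) hx)
      (GammaFn_sub_le_of_holder hmono hholder hL.le hβ hε.le hρ0 hhmax hK.ge hx)
  have hE1 := tailBound_le_rpow_one_third hε hmin0 (min_le_left _ _) hT hTρ hV0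
    (min_le_left _ _)
  have hE2 := tailBound_le_of_sq_mul_eq hε hmin0 (min_le_left _ _) hT hTρ
    (by positivity : 0 ≤ (L * ε ^ β) ^ (1 / (2 * β + 1))) (sq_rpow_mul_rpow_eq hL hε hβ0)
  calc _ ≤ V * tailBound ε (min ρ hmax) T + (b - a) * (ε / hmax ^ 3) :=
        intervalIntegral_GammaFn_le hab.le hmono hε hmin0 (min_le_right _ _) hΓ hT hΓT
    _ ≤ _ := by
      rw [mul_min_of_nonneg _ _ (by positivity), mul_div_assoc]
      gcongr
      exact le_min (by nlinarith) (by nlinarith)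
end

section
/- Let β ∈ [1,2] and L > 0, and let f₀ be a continuous log-concave density on ℝ whose score function ψ₀ satisfies |ψ₀(x) − ψ₀(y)| ≤ L|x−y|^{β−1} for all x,y ∈ ℝ. Then the Fisher information satisfies i(f₀) := ∫ ψ₀² f₀ ≤ 8·L^{2/β}. -/
/-!
Log-concavity makes the score `ψ₀` antitone, and the Hölder bound keeps `log f₀` locally
Lipschitz, so `f₀` never vanishes and `ψ₀` changes sign at a single point `m`. With
`κ = L ^ (1 / β)`, comparing `ψ₀ x` with values of the opposite sign just across `m` gives
`|ψ₀ x| ≤ κ (κ |x - m|) ^ (β - 1)`. Hence `|ψ₀| ≤ κ` on `[m - 1/κ, m + 1/κ]`, where `log f₀`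
varies by at most `1`, so the unit mass forces `2 f₀ m ≤ e κ`; and `|ψ₀ x| ≤ κ (1 + κ |x - m|)`
everywhere. On each side of `m`, `ψ₀² f₀ ≤ κ (1 + κ |x - m|) |f₀'|` with `f₀' = ψ₀ f₀` of constant
sign, and integrating by parts gives `i(f₀) ≤ κ (2 f₀ m + κ) ≤ (e + 1) κ²`.
-/

open MeasureTheory Real Set Filter Topology

lemma concaveOn_log_of_rpow_mul_rpow_le {f : ℝ → ℝ} (hpos : ∀ x, 0 < f x)
    (h : ∀ x y : ℝ, ∀ t ∈ Icc (0:ℝ) 1, f x ^ t * f y ^ (1 - t) ≤ f (t * x + (1 - t) * y)) :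
    ConcaveOn ℝ univ fun x => log (f x) := by
  refine ⟨convex_univ, fun x _ y _ a b ha hb hab => ?_⟩
  obtain rfl : b = 1 - a := by linarith
  have := log_le_log (mul_pos (rpow_pos_of_pos (hpos x) _) (rpow_pos_of_pos (hpos y) _))
    (h x y a ⟨ha, by linarith⟩)
  rwa [log_mul (rpow_pos_of_pos (hpos x) _).ne' (rpow_pos_of_pos (hpos y) _).ne',
    log_rpow (hpos x), log_rpow (hpos y)] at this

lemma ConcaveOn.antitone_of_hasDerivWithinAt_Ici {φ ψ : ℝ → ℝ} (hφ : ConcaveOn ℝ univ φ)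
    (hψ : ∀ x, HasDerivWithinAt φ (ψ x) (Ici x) x) : Antitone ψ := by
  have hright : ∀ x, derivWithin (-φ) (Ioi x) x = -ψ x := fun x =>
    ((hψ x).mono Ioi_subset_Ici_self).neg.derivWithin (uniqueDiffWithinAt_Ioi x)
  intro x y hxy
  have := hφ.neg.monotoneOn_rightDeriv (by simp) (by simp) hxy
  simp only [hright] at this
  linarith

lemma HasDerivWithinAt.of_log {f : ℝ → ℝ} {d x : ℝ} {s : Set ℝ} (hpos : ∀ y, 0 < f y)
    (h : HasDerivWithinAt (fun y => Real.log (f y)) d s x) :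
    HasDerivWithinAt f (d * f x) s x := by
  have := h.exp
  simp only [exp_log (hpos _)] at this
  rwa [mul_comm] at this

lemma mul_exp_neg_mul_abs_le {f ψ : ℝ → ℝ} {I : Set ℝ} [I.OrdConnected] {C : ℝ}
    (hf : ContinuousOn f I) (hpos : ∀ x ∈ I, 0 < f x)
    (hψ : ∀ x ∈ I, HasDerivWithinAt (fun t => log (f t)) (ψ x) (Ici x) x)
    (hC : ∀ x ∈ I, |ψ x| ≤ C) {x y : ℝ} (hx : x ∈ I) (hy : y ∈ I) :
    f x * exp (-(C * |y - x|)) ≤ f y := by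
  have hlog : |log (f y) - log (f x)| ≤ C * |y - x| := by
    wlog hxy : x ≤ y generalizing x y
    · rw [abs_sub_comm, abs_sub_comm y]
      exact this hy hx (le_of_not_ge hxy)
    have hsub : Icc x y ⊆ I := Set.Icc_subset I hx hy
    rw [abs_of_nonneg (sub_nonneg.2 hxy)]
    exact norm_image_sub_le_of_norm_deriv_right_le_segment
      ((hf.mono hsub).log fun z hz => (hpos z (hsub hz)).ne')
      (fun z hz => hψ z (hsub (Ico_subset_Icc_self hz)))
      (fun z hz => hC z (hsub (Ico_subset_Icc_self hz))) y ⟨hxy, le_rfl⟩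
  calc f x * exp (-(C * |y - x|)) = exp (log (f x) - C * |y - x|) := by
        rw [exp_sub, exp_log (hpos x hx), div_eq_mul_inv, exp_neg]
    _ ≤ exp (log (f y)) := exp_le_exp.2 (by linarith [neg_abs_le (log (f y) - log (f x))])
    _ = f y := exp_log (hpos y hy)

lemma pos_of_pos_on_Ioo {f ψ : ℝ → ℝ} {a b C : ℝ} (hab : a < b)
    (hf : ContinuousOn f (Icc a b)) (hpos : ∀ x ∈ Ioo a b, 0 < f x)
    (hψ : ∀ x ∈ Ioo a b, HasDerivWithinAt (fun t => log (f t)) (ψ x) (Ici x) x)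
    (hC : ∀ x ∈ Ioo a b, |ψ x| ≤ C) : ∀ x ∈ Icc a b, 0 < f x := by
  obtain ⟨c, hc⟩ := exists_between hab
  have hC0 : 0 ≤ C := (abs_nonneg _).trans (hC c hc)
  have hfc := hpos c hc
  have hlow : Ioo a b ⊆ Icc a b ∩ f ⁻¹' Ici (f c * exp (-(C * (b - a)))) := fun x hx => by
    have hdist : |x - c| ≤ b - a := abs_sub_le_of_le_of_le hx.1.le hx.2.le hc.1.le hc.2.le
    refine ⟨Ioo_subset_Icc_self hx, ?_⟩
    calc f c * exp (-(C * (b - a))) ≤ f c * exp (-(C * |x - c|)) := by gcongr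
      _ ≤ f x := mul_exp_neg_mul_abs_le (hf.mono Ioo_subset_Icc_self) hpos hψ hC hc hx
  intro x hx
  rw [← closure_Ioo hab.ne] at hx
  exact (mul_pos hfc (exp_pos _)).trans_le
    (closure_minimal hlow (hf.preimage_isClosed_of_isClosed isClosed_Icc isClosed_Ici) hx).2

theorem pos_of_hasDerivWithinAt_log {f ψ : ℝ → ℝ} (hf : Continuous f) (hf0 : ∀ x, 0 ≤ f x)
    {x₀ : ℝ} (hx₀ : 0 < f x₀)
    (hψ : ∀ x, 0 < f x → HasDerivWithinAt (fun t => log (f t)) (ψ x) (Ici x) x)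
    (hbdd : ∀ a b, ∃ C, ∀ x ∈ Icc a b, |ψ x| ≤ C) (y : ℝ) : 0 < f y := by
  by_contra hy
  -- a zero of `f` closest to `x₀`
  obtain ⟨z, ⟨hzI, hz0⟩, hzmin⟩ := (isCompact_uIcc.inter_right
    (isClosed_singleton.preimage hf)).exists_isMinOn
    ⟨y, right_mem_uIcc, le_antisymm (not_lt.1 hy) (hf0 y)⟩
    (continuous_sub_right x₀).abs.continuousOn
  have hne : x₀ ≠ z := by rintro rfl; exact hx₀.ne' hz0
  have hbetween : ∀ w ∈ uIoo x₀ z, 0 < f w := by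
    intro w hw
    refine (hf0 w).lt_of_ne fun hw0 => ?_
    have := hzmin ⟨uIcc_subset_uIcc_left hzI (uIoo_subset_uIcc_self hw), hw0.symm⟩
    simp only [mem_ofPred_eq] at this
    rcases le_total x₀ z with h | h <;> simp only [uIoo, mem_Ioo, h, inf_of_le_left,
      sup_of_le_right, inf_of_le_right, sup_of_le_left] at hw <;>
      cases abs_cases (z - x₀) <;> cases abs_cases (w - x₀) <;> linarith
  obtain ⟨C, hC⟩ := hbdd (x₀ ⊓ z) (x₀ ⊔ z)
  have := pos_of_pos_on_Ioo (inf_lt_sup.2 hne) hf.continuousOn hbetween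
    (fun w hw => hψ w (hbetween w hw)) (fun w hw => hC w (Ioo_subset_Icc_self hw)) z
    right_mem_uIcc
  exact this.ne' hz0

lemma exists_abs_le_of_holder {ψ : ℝ → ℝ} {L γ : ℝ} (hL : 0 ≤ L) (hγ : 0 ≤ γ)
    (hholder : ∀ x y, |ψ x - ψ y| ≤ L * |x - y| ^ γ) (a b : ℝ) :
    ∃ C, ∀ x ∈ Icc a b, |ψ x| ≤ C := by
  refine ⟨|ψ a| + L * (b - a) ^ γ, fun x hx => ?_⟩
  have hxa : |x - a| ^ γ ≤ (b - a) ^ γ := by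
    rw [abs_of_nonneg (sub_nonneg.2 hx.1)]
    exact rpow_le_rpow (sub_nonneg.2 hx.1) (by linarith [hx.2]) hγ
  linarith [abs_sub_abs_le_abs_sub (ψ x) (ψ a), hholder x a, mul_le_mul_of_nonneg_left hxa hL]

lemma Monotone.nonpos_of_integrable {f : ℝ → ℝ} (hmono : Monotone f) (hf : Integrable f)
    (x : ℝ) : f x ≤ 0 := by
  by_contra! hx
  obtain ⟨n, hn⟩ := exists_nat_gt ((∫ y, ‖f y‖) / f x)
  have hn0 : (0 : ℝ) ≤ n := n.cast_nonneg
  have hlow := setIntegral_ge_of_const_le_real measurableSet_Icc measure_Icc_lt_top.ne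
    (fun y (hy : y ∈ Icc x (x + n)) => hmono hy.1) hf.integrableOn
  rw [Real.volume_real_Icc_of_le (by linarith), add_sub_cancel_left] at hlow
  have hup : ∫ y in Icc x (x + n), f y ≤ ∫ y, ‖f y‖ :=
    (le_abs_self _).trans ((abs_integral_le_integral_abs).trans
      (setIntegral_le_integral hf.norm (Eventually.of_forall fun _ => abs_nonneg _)))
  rw [div_lt_iff₀ hx] at hn
  linarith

lemma Antitone.nonpos_of_integrable {f : ℝ → ℝ} (hanti : Antitone f) (hf : Integrable f)
    (x : ℝ) : f x ≤ 0 := by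
  simpa using (show Monotone fun y => f (-y) from fun _ _ h => hanti (neg_le_neg h))
    |>.nonpos_of_integrable hf.comp_neg (-x)

lemma monotone_of_hasDerivWithinAt_Ici_nonneg {f f' : ℝ → ℝ} (hf : Continuous f)
    (hf' : ∀ x, HasDerivWithinAt f (f' x) (Ici x) x) (hnonneg : ∀ x, 0 ≤ f' x) :
    Monotone f := fun x y hxy => by
  have := image_le_of_deriv_right_le_deriv_boundary (f := fun t => -f t) (f' := fun t => -f' t)
    (B := fun _ => -f x) (B' := 0) hf.neg.continuousOn (fun t _ => (hf' t).neg) le_rfl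
    continuousOn_const (fun t _ => hasDerivWithinAt_const t _ _)
    (fun t _ => by simpa using hnonneg t) ⟨hxy, le_rfl⟩
  linarith

lemma exists_neg_and_exists_pos_of_integrable {f ψ : ℝ → ℝ} (hf : Continuous f)
    (hpos : ∀ x, 0 < f x) (hfi : Integrable f)
    (hf' : ∀ x, HasDerivWithinAt f (ψ x * f x) (Ici x) x) :
    (∃ x, ψ x < 0) ∧ ∃ x, 0 < ψ x := by
  constructor
  · by_contra! h
    have := (monotone_of_hasDerivWithinAt_Ici_nonneg hf hf' fun x =>
      mul_nonneg (h x) (hpos x).le).nonpos_of_integrable hfi 0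
    linarith [hpos 0]
  · by_contra! h
    have hmono := monotone_of_hasDerivWithinAt_Ici_nonneg hf.neg (fun x => (hf' x).neg)
      fun x => neg_nonneg.2 (mul_nonpos_of_nonpos_of_nonneg (h x) (hpos x).le)
    have := (show Antitone f from fun x y hxy => neg_le_neg_iff.1 (hmono hxy))
      |>.nonpos_of_integrable hfi 0
    linarith [hpos 0]

lemma Antitone.exists_sign_change {ψ : ℝ → ℝ} (hψ : Antitone ψ) (hpos : ∃ x, 0 < ψ x)
    (hnonpos : ∃ x, ψ x ≤ 0) : ∃ m, (∀ x < m, 0 < ψ x) ∧ ∀ x > m, ψ x ≤ 0 := by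
  obtain ⟨b, hb⟩ := hnonpos
  have hbdd : BddAbove {x | 0 < ψ x} :=
    ⟨b, fun x hx => le_of_not_gt fun hbx => (hψ hbx.le).not_gt (hb.trans_lt hx)⟩
  refine ⟨sSup {x | 0 < ψ x}, fun x hx => ?_, fun x hx => ?_⟩
  · obtain ⟨s, hs, hxs⟩ := exists_lt_of_lt_csSup hpos hx
    exact (show 0 < ψ s from hs).trans_le (hψ hxs.le)
  · exact not_lt.1 fun h => (le_csSup hbdd h).not_gt hx

lemma abs_le_mul_rpow_of_holder {ψ : ℝ → ℝ} {m L γ : ℝ} (hγ : 0 ≤ γ)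
    (hholder : ∀ x y, |ψ x - ψ y| ≤ L * |x - y| ^ γ)
    (hpos : ∀ x < m, 0 ≤ ψ x) (hneg : ∀ x > m, ψ x ≤ 0) (x : ℝ) :
    |ψ x| ≤ L * |x - m| ^ γ := by
  have hlim : Tendsto (fun y => L * |x - y| ^ γ) (𝓝 m) (𝓝 (L * |x - m| ^ γ)) :=
    (continuous_const.mul ((continuous_const.sub continuous_id).abs.rpow_const
      fun _ => Or.inr hγ)).tendsto m
  refine abs_le.2 ⟨?_, ?_⟩
  · refine le_of_tendsto (hlim.mono_left nhdsWithin_le_nhds).neg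
      (eventually_nhdsWithin_of_forall (s := Iio m) fun y hy => ?_)
    linarith [hpos y hy, neg_abs_le (ψ x - ψ y), hholder x y]
  · refine ge_of_tendsto (hlim.mono_left nhdsWithin_le_nhds)
      (eventually_nhdsWithin_of_forall (s := Ioi m) fun y hy => ?_)
    linarith [hneg y hy, le_abs_self (ψ x - ψ y), hholder x y]

lemma rpow_mul_rpow_sub_one {a u : ℝ} (ha : 0 < a) (hu : 0 ≤ u) (β : ℝ) :
    a ^ β * u ^ (β - 1) = a * (a * u) ^ (β - 1) := by
  rw [mul_rpow ha.le hu, ← mul_assoc, mul_comm a, ← rpow_add_one ha.ne', sub_add_cancel]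

lemma rpow_le_one_add {v γ : ℝ} (hv : 0 ≤ v) (hγ : γ ∈ Icc (0 : ℝ) 1) : v ^ γ ≤ 1 + v := by
  rcases le_total v 1 with h | h
  · linarith [rpow_le_one hv h hγ.1]
  · linarith [(rpow_le_rpow_of_exponent_le h hγ.2).trans_eq (rpow_one v)]

lemma two_mul_mul_le_exp_one_mul_integral {f ψ : ℝ → ℝ} {m r C : ℝ} (hr : 0 ≤ r)
    (hf : Continuous f) (hpos : ∀ x, 0 < f x) (hfi : Integrable f)
    (hψ : ∀ x, HasDerivWithinAt (fun t => log (f t)) (ψ x) (Ici x) x)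
    (hC : ∀ x ∈ Icc (m - r) (m + r), |ψ x| ≤ C) (hCr : C * r ≤ 1) :
    2 * r * f m ≤ exp 1 * ∫ x, f x := by
  have hm : m ∈ Icc (m - r) (m + r) := mem_Icc_iff_abs_le.1 (by simpa using hr)
  have hC0 : 0 ≤ C := (abs_nonneg _).trans (hC m hm)
  have hlow : ∀ x ∈ Icc (m - r) (m + r), f m * exp (-1) ≤ f x := fun x hx => by
    have hCx : C * |x - m| ≤ 1 :=
      hCr.trans' (by gcongr; rw [abs_sub_comm]; exact mem_Icc_iff_abs_le.2 hx)
    calc f m * exp (-1) ≤ f m * exp (-(C * |x - m|)) := by have := hpos m; gcongr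
      _ ≤ f x := mul_exp_neg_mul_abs_le hf.continuousOn (fun x _ => hpos x) (fun x _ => hψ x)
        hC hm hx
  have hmass := (setIntegral_ge_of_const_le_real measurableSet_Icc measure_Icc_lt_top.ne hlow
    hfi.integrableOn).trans
    (setIntegral_le_integral hfi (Eventually.of_forall fun x => (hpos x).le))
  rw [volume_real_Icc_of_le (by linarith), exp_neg] at hmass
  calc 2 * r * f m = exp 1 * (f m * (exp 1)⁻¹ * (m + r - (m - r))) := by field_simp; ring
    _ ≤ exp 1 * ∫ x, f x := by gcongr

section WeightedScore

variable {f ψ : ℝ → ℝ} (hf : Continuous f) (hψ : LocallyIntegrable ψ)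
  (hf' : ∀ x, HasDerivWithinAt f (ψ x * f x) (Ici x) x)
include hf hψ hf'

lemma intervalIntegral_sq_mul_le_of_le (hf0 : ∀ x, 0 ≤ f x) {a b m k c : ℝ} (hab : a ≤ b)
    (hint : IntervalIntegrable (fun t => ψ t ^ 2 * f t) volume a b)
    (hpt : ∀ t ∈ Ioo a b, ψ t ^ 2 ≤ k * ((1 + c * (t - m)) * ψ t)) :
    ∫ t in a..b, ψ t ^ 2 * f t ≤
      k * ((1 + c * (b - m)) * f b - (1 + c * (a - m)) * f a - ∫ t in a..b, c * f t) := by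
  have hψf : IntervalIntegrable (fun t => ψ t * f t) volume a b :=
    ((hψ.integrableOn_isCompact isCompact_uIcc).intervalIntegrable).mul_continuousOn
      hf.continuousOn
  have hparts := intervalIntegral.integral_mul_deriv_eq_deriv_mul_of_hasDeriv_right
    (u := fun t => 1 + c * (t - m)) (u' := fun _ => c) (by fun_prop) hf.continuousOn
    (fun x _ => by simpa using (((hasDerivAt_id x).sub_const m).const_mul c).const_add 1
      |>.hasDerivWithinAt) (fun x _ => (hf' x).mono Ioi_subset_Ici_self)
    intervalIntegrable_const hψf
  calc ∫ t in a..b, ψ t ^ 2 * f t ≤ ∫ t in a..b, k * ((1 + c * (t - m)) * (ψ t * f t)) :=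
        intervalIntegral.integral_mono_on_of_le_Ioo hab hint
          ((hψf.continuousOn_mul (by fun_prop)).const_mul k) fun t ht => by
            have := mul_le_mul_of_nonneg_right (hpt t ht) (hf0 t)
            linarith
    _ = _ := by rw [intervalIntegral.integral_const_mul, hparts]

theorem integral_sq_mul_le_of_abs_le (hf0 : ∀ x, 0 ≤ f x) (hfi : Integrable f) {m κ : ℝ}
    (hκ : 0 ≤ κ) (hleft : ∀ x < m, 0 ≤ ψ x) (hright : ∀ x > m, ψ x ≤ 0)
    (hbound : ∀ x, |ψ x| ≤ κ * (1 + κ * |x - m|))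
    (hint : Integrable fun x => ψ x ^ 2 * f x) :
    ∫ x, ψ x ^ 2 * f x ≤ κ * (2 * f m + κ * ∫ x, f x) := by
  have hleft_half :
      ∀ S ≤ m, ∫ x in S..m, ψ x ^ 2 * f x ≤ κ * (f m + κ * ∫ x in S..m, f x) := by
    intro S hS
    have := intervalIntegral_sq_mul_le_of_le hf hψ hf' hf0 hS hint.intervalIntegrable
      (k := κ) (c := -κ) fun x hx => by
        have hx' := hbound x
        rw [abs_of_nonneg (hleft x hx.2), abs_of_neg (sub_neg.2 hx.2)] at hx'
        nlinarith [hleft x hx.2]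
    rw [intervalIntegral.integral_const_mul] at this
    nlinarith [mul_nonneg hκ (mul_nonneg (by nlinarith : 0 ≤ 1 + -κ * (S - m)) (hf0 S))]
  have hright_half :
      ∀ T ≥ m, ∫ x in m..T, ψ x ^ 2 * f x ≤ κ * (f m + κ * ∫ x in m..T, f x) := by
    intro T hT
    have := intervalIntegral_sq_mul_le_of_le hf hψ hf' hf0 hT hint.intervalIntegrable
      (k := -κ) (c := κ) fun x hx => by
        have hx' := hbound x
        rw [abs_of_nonpos (hright x hx.1), abs_of_pos (sub_pos.2 hx.1)] at hx'
        nlinarith [hright x hx.1]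
    rw [intervalIntegral.integral_const_mul] at this
    nlinarith [mul_nonneg hκ (mul_nonneg (by nlinarith : 0 ≤ 1 + κ * (T - m)) (hf0 T))]
  have hwindow :
      ∀ T ≥ 0, ∫ x in (m - T)..(m + T), ψ x ^ 2 * f x ≤ κ * (2 * f m + κ * ∫ x, f x) := by
    intro T hT
    rw [← intervalIntegral.integral_add_adjacent_intervals (b := m) hint.intervalIntegrable
      hint.intervalIntegrable]
    have hmass : (∫ x in (m - T)..m, f x) + ∫ x in m..(m + T), f x ≤ ∫ x, f x := by
      rw [intervalIntegral.integral_add_adjacent_intervals (hfi.intervalIntegrable (a := m - T))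
        (hfi.intervalIntegrable (b := m + T)), intervalIntegral.integral_of_le (by linarith)]
      exact setIntegral_le_integral hfi (Eventually.of_forall hf0)
    nlinarith [hleft_half (m - T) (by linarith), hright_half (m + T) (by linarith),
      mul_le_mul_of_nonneg_left hmass (mul_nonneg hκ hκ)]
  refine le_of_tendsto (intervalIntegral_tendsto_integral hint ?_ ?_)
    ((eventually_ge_atTop 0).mono hwindow)
  · exact (tendsto_atBot_add_const_left atTop m tendsto_neg_atTop_atBot).congr fun T =>
      (sub_eq_add_neg m T).symm
  · exact tendsto_atTop_add_const_left atTop m tendsto_id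

end WeightedScore

theorem integral_sq_mul_le_of_holder {f ψ : ℝ → ℝ} {m L β : ℝ} (hL : 0 < L)
    (hβ : β ∈ Icc (1 : ℝ) 2) (hf : Continuous f) (hpos : ∀ x, 0 < f x) (hfi : Integrable f)
    (hψ : ∀ x, HasDerivWithinAt (fun t => log (f t)) (ψ x) (Ici x) x)
    (hψi : LocallyIntegrable ψ) (hleft : ∀ x < m, 0 ≤ ψ x) (hright : ∀ x > m, ψ x ≤ 0)
    (hholder : ∀ x y, |ψ x - ψ y| ≤ L * |x - y| ^ (β - 1))
    (hint : Integrable fun x => ψ x ^ 2 * f x) :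
    ∫ x, ψ x ^ 2 * f x ≤ (exp 1 + 1) * L ^ (2 / β) * ∫ x, f x := by
  obtain ⟨hβ1, hβ2⟩ := hβ
  set κ := L ^ (1 / β)
  have hκ : 0 < κ := rpow_pos_of_pos hL _
  have hbound x : |ψ x| ≤ κ * (κ * |x - m|) ^ (β - 1) := by
    rw [← rpow_mul_rpow_sub_one hκ (abs_nonneg _), ← rpow_mul hL.le,
      one_div_mul_cancel (by linarith), rpow_one]
    exact abs_le_mul_rpow_of_holder (by linarith) hholder hleft hright x
  have hnear : ∀ x ∈ Icc (m - κ⁻¹) (m + κ⁻¹), |ψ x| ≤ κ := fun x hx => by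
    have hκx : κ * |x - m| ≤ 1 := by
      rw [← mul_inv_cancel₀ hκ.ne', abs_sub_comm]
      exact mul_le_mul_of_nonneg_left (mem_Icc_iff_abs_le.2 hx) hκ.le
    exact (hbound x).trans
      (mul_le_of_le_one_right hκ.le (rpow_le_one (by positivity) hκx (by linarith)))
  have hfar x : |ψ x| ≤ κ * (1 + κ * |x - m|) := (hbound x).trans <|
    mul_le_mul_of_nonneg_left (rpow_le_one_add (by positivity) ⟨by linarith, by linarith⟩) hκ.le
  have hmode : 2 * f m ≤ exp 1 * κ * ∫ x, f x := by
    have := mul_le_mul_of_nonneg_left (two_mul_mul_le_exp_one_mul_integral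
      (inv_nonneg.2 hκ.le) hf hpos hfi hψ hnear (mul_inv_cancel₀ hκ.ne').le) hκ.le
    field_simp at this
    linarith
  have hsq : L ^ (2 / β) = κ ^ 2 := by rw [← rpow_natCast, ← rpow_mul hL.le]; ring_nf
  calc ∫ x, ψ x ^ 2 * f x ≤ κ * (2 * f m + κ * ∫ x, f x) :=
        integral_sq_mul_le_of_abs_le hf hψi (fun x => (hψ x).of_log hpos) (fun x => (hpos x).le)
          hfi hκ.le hleft hright hfar hint
    _ ≤ (exp 1 + 1) * L ^ (2 / β) * ∫ x, f x := by
      rw [hsq]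
      nlinarith [mul_le_mul_of_nonneg_left hmode hκ.le]

/-- If `f₀` is a continuous log-concave density on `ℝ` whose score `ψ₀` (right derivative of
`log f₀`) is `(β−1, L)`-Hölder with `β ∈ [1,2]`, then the Fisher information satisfies
`i(f₀) = ∫ ψ₀² f₀ ≤ 8 L^{2/β}`. -/
theorem fisher_information_holder_bound
    (β L : ℝ) (hβ : β ∈ Set.Icc (1:ℝ) 2) (hL : 0 < L)
    (f₀ : ℝ → ℝ) (hcont : Continuous f₀)
    (hf_nonneg : ∀ x, 0 ≤ f₀ x) (hf_int : Integrable f₀ volume) (hf_mass : ∫ x, f₀ x = 1)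
    (hlogconc : ∀ x y : ℝ, ∀ t ∈ Set.Icc (0:ℝ) 1,
      f₀ x ^ t * f₀ y ^ (1 - t) ≤ f₀ (t * x + (1 - t) * y))
    (ψ₀ : ℝ → ℝ)
    (hψ : ∀ x : ℝ, 0 < f₀ x →
      HasDerivWithinAt (fun t => Real.log (f₀ t)) (ψ₀ x) (Set.Ici x) x)
    (hholder : ∀ x y : ℝ, |ψ₀ x - ψ₀ y| ≤ L * |x - y| ^ (β - 1)) :
    ∫ x, (ψ₀ x)^2 * f₀ x ≤ 8 * L ^ (2 / β) := by
  by_cases hint : Integrable fun x => ψ₀ x ^ 2 * f₀ x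
  swap
  · rw [integral_undef hint]
    positivity
  obtain ⟨x₀, hx₀⟩ : ∃ x₀, 0 < f₀ x₀ := by
    by_contra! h
    simp [funext fun x => le_antisymm (h x) (hf_nonneg x)] at hf_mass
  have hpos := pos_of_hasDerivWithinAt_log hcont hf_nonneg hx₀ hψ
    (exists_abs_le_of_holder hL.le (by linarith [hβ.1]) hholder)
  have hψ' x : HasDerivWithinAt (fun t => log (f₀ t)) (ψ₀ x) (Ici x) x := hψ x (hpos x)
  have hanti :=
    (concaveOn_log_of_rpow_mul_rpow_le hpos hlogconc).antitone_of_hasDerivWithinAt_Ici hψ'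
  obtain ⟨⟨b, hb⟩, hsign⟩ := exists_neg_and_exists_pos_of_integrable hcont hpos hf_int
    fun x => (hψ' x).of_log hpos
  obtain ⟨m, hleft, hright⟩ := hanti.exists_sign_change hsign ⟨b, hb.le⟩
  calc ∫ x, ψ₀ x ^ 2 * f₀ x ≤ (exp 1 + 1) * L ^ (2 / β) * ∫ x, f₀ x :=
        integral_sq_mul_le_of_holder hL hβ hcont hpos hf_int hψ' hanti.locallyIntegrable
          (fun x hx => (hleft x hx).le) hright hholder hint
    _ ≤ 8 * L ^ (2 / β) := by
      rw [hf_mass, mul_one]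
      gcongr
      linarith [exp_one_lt_d9]
end
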